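/- Let N ≥ 1, α ∈ (0,1), R > 0 and k₁, k₂ ≥ 0. Let μ be a finite Borel measure on ℝ^N, supported in the closed ball of radius R centered at the origin, with total mass μ(ℝ^N) ≤ 1, and suppose that for every y ∈ (0,R] one has μ({x ∈ ℝ^N : |x| ≥ y}) ≤ k₁/y² + k₂/y. Then ∫_{ℝ^N} |x|^α dμ(x) ≤ (α/(2−α)) k₁^{α/2} + k₁^{α/2} + (α/(1−α)) k₂^α + k₂^α. -/

import Mathlib

open MeasureTheory Set Metric

/-!
By the layer-cake formula applied to `‖x‖ ^ α`, `∫ ‖x‖ ^ α dμ = ∫₀^∞ μ{t^{1/α} < ‖x‖} dt`.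
The tail hypothesis, the support condition and the mass bound give
`μ{y < ‖x‖} ≤ min 1 (k₁ / y²) + min 1 (k₂ / y)` for all `y > 0`, and
`∫₀^∞ min 1 (c / t^p) dt = p / (p - 1) · c^{1/p}` for `p > 1` (the integrand is `1` up to
`c^{1/p}` and `c t^{-p}` beyond). Taking `p = 2/α` and `p = 1/α` gives the constants.
-/

lemma min_add_le_min_add_min {a b c : ℝ} (ha : 0 ≤ a) (hb : 0 ≤ b) (hc : 0 ≤ c) :
    min c (a + b) ≤ min c a + min c b := by
  simp only [min_def]
  split_ifs <;> linarith

section MinOneDivRpow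

variable {c p : ℝ}

lemma min_one_div_rpow_eqOn_Ioc (hc : 0 ≤ c) (hp : 0 < p) :
    EqOn (fun t : ℝ => min 1 (c / t ^ p)) (fun _ => 1) (Ioc 0 (c ^ p⁻¹)) := by
  rintro t ⟨ht, htT⟩
  have htp : t ^ p ≤ c := (Real.le_rpow_inv_iff_of_pos ht.le hc hp).1 htT
  exact min_eq_left ((one_le_div (by positivity)).2 htp)

lemma min_one_div_rpow_eqOn_Ioi (hc : 0 ≤ c) (hp : 0 < p) :
    EqOn (fun t : ℝ => min 1 (c / t ^ p)) (fun t => c * t ^ (-p)) (Ioi (c ^ p⁻¹)) := by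
  intro t (hTt : c ^ p⁻¹ < t)
  have ht : 0 < t := (by positivity : 0 ≤ c ^ p⁻¹).trans_lt hTt
  have hct : c ≤ t ^ p := ((Real.rpow_inv_lt_iff_of_pos hc ht.le hp).1 hTt).le
  dsimp only
  rw [min_eq_right ((div_le_one (by positivity)).2 hct), Real.rpow_neg ht.le, div_eq_mul_inv]

lemma integrableOn_Ioi_min_one_div_rpow (hc : 0 ≤ c) (hp : 1 < p) :
    IntegrableOn (fun t : ℝ => min 1 (c / t ^ p)) (Ioi 0) := by
  rcases hc.eq_or_lt with rfl | hc
  · simp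
  rw [← Ioc_union_Ioi_eq_Ioi (by positivity : 0 ≤ c ^ p⁻¹)]
  refine IntegrableOn.union ?_ ?_
  · exact (integrableOn_const (by simp)).congr_fun
      (min_one_div_rpow_eqOn_Ioc hc.le (by linarith)).symm measurableSet_Ioc
  · exact IntegrableOn.congr_fun
      ((integrableOn_Ioi_rpow_of_lt (a := -p) (by linarith) (by positivity)).const_mul c)
      (min_one_div_rpow_eqOn_Ioi hc.le (by linarith)).symm measurableSet_Ioi

lemma integral_Ioi_min_one_div_rpow (hc : 0 ≤ c) (hp : 1 < p) :
    ∫ t in Ioi 0, min 1 (c / t ^ p) = p / (p - 1) * c ^ p⁻¹ := by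
  rcases hc.eq_or_lt with rfl | hc
  · simp [Real.zero_rpow (inv_ne_zero (by linarith : p ≠ 0))]
  set T := c ^ p⁻¹ with hT_def
  have hT : 0 < T := by positivity
  have hint := integrableOn_Ioi_min_one_div_rpow hc.le hp
  rw [← Ioc_union_Ioi_eq_Ioi hT.le] at hint ⊢
  rw [setIntegral_union (Ioc_disjoint_Ioi le_rfl) measurableSet_Ioi
      (hint.mono_set subset_union_left) (hint.mono_set subset_union_right),
    setIntegral_congr_fun measurableSet_Ioc (min_one_div_rpow_eqOn_Ioc hc.le (by linarith)),
    setIntegral_congr_fun measurableSet_Ioi (min_one_div_rpow_eqOn_Ioi hc.le (by linarith)),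
    integral_const_mul, integral_Ioi_rpow_of_lt (by linarith) hT]
  have hcT : c * T ^ (-p + 1) = T := by
    rw [Real.rpow_add hT, Real.rpow_neg hT.le, Real.rpow_one,
      hT_def, Real.rpow_inv_rpow hc.le (by linarith)]
    field_simp
  rw [setIntegral_const, Real.volume_real_Ioc_of_le hT.le, mul_div_assoc', mul_neg, hcT]
  have hp₁ : p - 1 ≠ 0 := by linarith
  have hp₂ : -p + 1 ≠ 0 := by linarith
  field_simp
  ring

end MinOneDivRpow

section Tail

variable {Ω : Type*} [MeasurableSpace Ω] {μ : Measure Ω} {f : Ω → ℝ} {R : ℝ}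

lemma MeasureTheory.Integrable.integral_rpow_eq_integral_meas_rpow_inv_lt {α : ℝ}
    (hα : 0 < α) (hf : 0 ≤ f) (hint : Integrable (fun ω => f ω ^ α) μ) :
    ∫ ω, f ω ^ α ∂μ = ∫ t in Ioi 0, μ.real {ω | t ^ α⁻¹ < f ω} := by
  rw [hint.integral_eq_integral_meas_lt (.of_forall fun ω => Real.rpow_nonneg (hf ω) α)]
  refine setIntegral_congr_fun measurableSet_Ioi fun t (ht : 0 < t) => ?_
  simp only [Real.rpow_inv_lt_iff_of_pos ht.le (hf _) hα]

lemma measure_lt_le_of_tail {B : ℝ → ENNReal} (hsupp : ∀ᵐ ω ∂μ, f ω ≤ R)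
    (htail : ∀ y ∈ Ioc 0 R, μ {ω | y ≤ f ω} ≤ B y) {y : ℝ} (hy : 0 < y) :
    μ {ω | y < f ω} ≤ B y := by
  rcases le_or_gt y R with hyR | hRy
  · exact (measure_mono fun ω (h : y < f ω) => h.le).trans (htail y ⟨hy, hyR⟩)
  · have hnull : μ {ω | y < f ω} = 0 :=
      measure_eq_zero_iff_ae_notMem.2 (hsupp.mono fun ω hω (h : y < f ω) => by linarith)
    exact hnull.trans_le zero_le

lemma measureReal_lt_le_of_tail {k₁ k₂ : ℝ} (hk₁ : 0 ≤ k₁) (hk₂ : 0 ≤ k₂)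
    (hsupp : ∀ᵐ ω ∂μ, f ω ≤ R) (hmass : μ univ ≤ 1)
    (htail : ∀ y ∈ Ioc 0 R, μ {ω | y ≤ f ω} ≤ ENNReal.ofReal (k₁ / y ^ 2 + k₂ / y))
    {y : ℝ} (hy : 0 < y) :
    μ.real {ω | y < f ω} ≤ min 1 (k₁ / y ^ 2) + min 1 (k₂ / y) := by
  have hle_one : μ.real {ω | y < f ω} ≤ 1 :=
    ENNReal.toReal_le_of_le_ofReal zero_le_one
      (by simpa using (measure_mono (subset_univ _)).trans hmass)
  have hle_tail : μ.real {ω | y < f ω} ≤ k₁ / y ^ 2 + k₂ / y :=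
    ENNReal.toReal_le_of_le_ofReal (by positivity) (measure_lt_le_of_tail hsupp htail hy)
  exact (le_min hle_one hle_tail).trans
    (min_add_le_min_add_min (by positivity) (by positivity) zero_le_one)

end Tail

theorem moment_bound_from_tails_general
    (N : ℕ) (α : ℝ) (hα0 : 0 < α) (hα1 : α < 1)
    (R : ℝ) (k₁ k₂ : ℝ) (hk₁ : 0 ≤ k₁) (hk₂ : 0 ≤ k₂)
    (μ : Measure (EuclideanSpace ℝ (Fin N))) [IsFiniteMeasure μ]
    (hsupp : μ (closedBall (0 : EuclideanSpace ℝ (Fin N)) R)ᶜ = 0)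
    (hmass : μ univ ≤ 1)
    (htail : ∀ y : ℝ, y ∈ Ioc (0 : ℝ) R →
      μ {x : EuclideanSpace ℝ (Fin N) | y ≤ ‖x‖} ≤ ENNReal.ofReal (k₁ / y ^ 2 + k₂ / y)) :
    ∫ x, ‖x‖ ^ α ∂μ
      ≤ α / (2 - α) * k₁ ^ (α / 2) + k₁ ^ (α / 2) + α / (1 - α) * k₂ ^ α + k₂ ^ α := by
  have hnorm_le : ∀ᵐ x ∂μ, ‖x‖ ≤ R :=
    (measure_eq_zero_iff_ae_notMem.1 hsupp).mono fun x hx => by simpa using hx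
  have hint : Integrable (fun x => ‖x‖ ^ α) μ := by
    refine .of_bound (continuous_norm.rpow_const fun _ => .inr hα0.le).aestronglyMeasurable
      (R ^ α) ?_
    filter_upwards [hnorm_le] with x hx
    rw [Real.norm_of_nonneg (by positivity)]
    exact Real.rpow_le_rpow (norm_nonneg x) hx hα0.le
  have hp₁ : 1 < 2 / α := by rw [lt_div_iff₀ hα0]; linarith
  have hp₂ : 1 < α⁻¹ := one_lt_inv_iff₀.2 ⟨hα0, hα1⟩
  have h₁ := integrableOn_Ioi_min_one_div_rpow hk₁ hp₁
  have h₂ := integrableOn_Ioi_min_one_div_rpow hk₂ hp₂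
  calc ∫ x, ‖x‖ ^ α ∂μ = ∫ t in Ioi 0, μ.real {x | t ^ α⁻¹ < ‖x‖} :=
        hint.integral_rpow_eq_integral_meas_rpow_inv_lt hα0 fun x => norm_nonneg x
    _ ≤ ∫ t in Ioi 0, (min 1 (k₁ / t ^ (2 / α)) + min 1 (k₂ / t ^ α⁻¹)) := by
        refine integral_mono_of_nonneg (.of_forall fun _ => measureReal_nonneg) (h₁.add h₂) ?_
        filter_upwards [ae_restrict_mem measurableSet_Ioi] with t (ht : 0 < t)
        have hsq : (t ^ α⁻¹) ^ 2 = t ^ (2 / α) := by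
          rw [← Real.rpow_natCast, ← Real.rpow_mul ht.le]
          ring_nf
        simpa only [hsq] using
          measureReal_lt_le_of_tail hk₁ hk₂ hnorm_le hmass htail (by positivity : 0 < t ^ α⁻¹)
    _ = 2 / α / (2 / α - 1) * k₁ ^ (2 / α)⁻¹ + α⁻¹ / (α⁻¹ - 1) * k₂ ^ α⁻¹⁻¹ := by
        rw [integral_add h₁ h₂, integral_Ioi_min_one_div_rpow hk₁ hp₁,
          integral_Ioi_min_one_div_rpow hk₂ hp₂]
    _ = α / (2 - α) * k₁ ^ (α / 2) + k₁ ^ (α / 2) + α / (1 - α) * k₂ ^ α + k₂ ^ α := by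
        have h2α : 2 - α ≠ 0 := by linarith
        have h1α : 1 - α ≠ 0 := by linarith
        rw [inv_div, inv_inv]
        field_simp
        ring

/-- **α-moment bound from tail estimates** (core of Lemma A.1): if `μ` is a finite
Borel measure supported in `closedBall 0 R` with total mass at most `1` whose tails
satisfy `μ{|x| ≥ y} ≤ k₁/y² + k₂/y` for `0 < y ≤ R`, then
`∫ |x|^α dμ ≤ (α/(2-α)) k₁^{α/2} + k₁^{α/2} + (α/(1-α)) k₂^α + k₂^α`. -/
theorem moment_bound_from_tails
    (N : ℕ) (hN : 1 ≤ N) (α : ℝ) (hα0 : 0 < α) (hα1 : α < 1)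
    (R : ℝ) (hR : 0 < R) (k₁ k₂ : ℝ) (hk₁ : 0 ≤ k₁) (hk₂ : 0 ≤ k₂)
    (μ : Measure (EuclideanSpace ℝ (Fin N))) [IsFiniteMeasure μ]
    (hsupp : μ (closedBall (0 : EuclideanSpace ℝ (Fin N)) R)ᶜ = 0)
    (hmass : μ univ ≤ 1)
    (htail : ∀ y : ℝ, y ∈ Ioc (0 : ℝ) R →
      μ {x : EuclideanSpace ℝ (Fin N) | y ≤ ‖x‖} ≤ ENNReal.ofReal (k₁ / y ^ 2 + k₂ / y)) :
    ∫ x, ‖x‖ ^ α ∂μ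
      ≤ α / (2 - α) * k₁ ^ (α / 2) + k₁ ^ (α / 2) + α / (1 - α) * k₂ ^ α + k₂ ^ α :=
  moment_bound_from_tails_general N α hα0 hα1 R k₁ k₂ hk₁ hk₂ μ hsupp hmass htail
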